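/- arXiv:math/0405286 — 8 statements merged into one kernel-verified Lean document; each statement's English description precedes it below -/
import Mathlib

section
/- Let h₀ > 0, let f₀ be a real number, and let n be a real number with n ≠ 2. Suppose G : (0,∞) → ℝ is differentiable and satisfies 2·h₀·xⁿ·G′(x) + n·h₀·x^(n−1)·G(x) = f₀ for all x > 0. Then there exists a real constant c such that G(x) = (c/√h₀)·x^(−n/2) + (f₀/h₀)·x^(1−n)/(2−n) for all x > 0. -/
/-!
The factor `x ^ (n / 2)` is an integrating factor: `2 xⁿ H' + n xⁿ⁻¹ H` is `2 x ^ (n / 2)` times the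
derivative of `x ^ (n / 2) * H`, so the homogeneous solutions are `c * x ^ (-n / 2)`. For `n ≠ 2`,
`x ^ (1 - n) / (2 - n)` solves the equation with right-hand side `1`, and the general solution is
this particular solution scaled by `f₀ / h₀` plus a homogeneous one.
-/

open Real Set

lemma hasDerivAt_rpow_half_mul {n x g : ℝ} {H : ℝ → ℝ} (hx : 0 < x) (hH : HasDerivAt H g x) :
    HasDerivAt (fun y => y ^ (n / 2) * H y)
      (x ^ (-n / 2) * (2 * x ^ n * g + n * x ^ (n - 1) * H x) / 2) x := by
  refine ((hasDerivAt_rpow_const (p := n / 2) (Or.inl hx.ne')).mul hH).congr_deriv ?_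
  have e₁ : x ^ (-n / 2) * x ^ n = x ^ (n / 2) := by rw [← rpow_add hx]; ring_nf
  have e₂ : x ^ (-n / 2) * x ^ (n - 1) = x ^ (n / 2 - 1) := by rw [← rpow_add hx]; ring_nf
  linear_combination (-g) * e₁ - n / 2 * H x * e₂

lemma exists_eq_const_mul_rpow_of_homogeneous {n : ℝ} {H H' : ℝ → ℝ}
    (hH : ∀ x, 0 < x → HasDerivAt H (H' x) x)
    (hode : ∀ x, 0 < x → 2 * x ^ n * H' x + n * x ^ (n - 1) * H x = 0) :
    ∃ c : ℝ, ∀ x, 0 < x → H x = c * x ^ (-n / 2) := by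
  have hderiv : ∀ x ∈ Ioi (0 : ℝ), HasDerivAt (fun y => y ^ (n / 2) * H y) 0 x := fun x hx => by
    simpa [hode x hx] using hasDerivAt_rpow_half_mul (n := n) hx (hH x hx)
  obtain ⟨c, hc⟩ := isOpen_Ioi.exists_is_const_of_deriv_eq_zero isPreconnected_Ioi
    (fun x hx => (hderiv x hx).differentiableAt.differentiableWithinAt)
    (fun x hx => (hderiv x hx).deriv)
  refine ⟨c, fun x hx => ?_⟩
  have hcancel : x ^ (-n / 2) * x ^ (n / 2) = 1 := by
    rw [← rpow_add hx, show -n / 2 + n / 2 = 0 by ring, rpow_zero]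
  calc H x = x ^ (-n / 2) * (x ^ (n / 2) * H x) := by rw [← mul_assoc, hcancel, one_mul]
    _ = c * x ^ (-n / 2) := by rw [hc x hx, mul_comm]

lemma rpow_one_sub_div_solves {n x : ℝ} (hn : n ≠ 2) (hx : 0 < x) :
    2 * x ^ n * ((1 - n) * x ^ (1 - n - 1) / (2 - n)) + n * x ^ (n - 1) * (x ^ (1 - n) / (2 - n))
      = 1 := by
  have h2n : (2 : ℝ) - n ≠ 0 := sub_ne_zero.2 hn.symm
  have e₁ : x ^ n * x ^ (1 - n - 1) = 1 := by
    rw [← rpow_add hx, show n + (1 - n - 1) = 0 by ring, rpow_zero]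
  have e₂ : x ^ (n - 1) * x ^ (1 - n) = 1 := by
    rw [← rpow_add hx, show n - 1 + (1 - n) = 0 by ring, rpow_zero]
  field_simp
  linear_combination 2 * (1 - n) * e₁ + n * e₂

theorem stmt_4 (h₀ f₀ n : ℝ) (hh₀ : 0 < h₀) (hn : n ≠ 2)
    (G G' : ℝ → ℝ)
    (hdiff : ∀ x : ℝ, 0 < x → HasDerivAt G (G' x) x)
    (hode : ∀ x : ℝ, 0 < x →
      2 * h₀ * x ^ n * G' x + n * h₀ * x ^ (n - 1) * G x = f₀) :
    ∃ c : ℝ, ∀ x : ℝ, 0 < x →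
      G x = (c / Real.sqrt h₀) * x ^ (-n / 2) + (f₀ / h₀) * x ^ (1 - n) / (2 - n) := by
  set P : ℝ → ℝ := fun y => f₀ / h₀ * (y ^ (1 - n) / (2 - n))
  set P' : ℝ → ℝ := fun y => f₀ / h₀ * ((1 - n) * y ^ (1 - n - 1) / (2 - n))
  have hP : ∀ x, 0 < x → HasDerivAt P (P' x) x := fun x hx =>
    ((hasDerivAt_rpow_const (p := 1 - n) (Or.inl hx.ne')).div_const (2 - n)).const_mul _
  obtain ⟨c, hc⟩ := exists_eq_const_mul_rpow_of_homogeneous (n := n) (H := G - P) (H' := G' - P')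
    (fun x hx => (hdiff x hx).sub (hP x hx)) fun x hx => by
      have hGP := hode x hx
      have hPP := rpow_one_sub_div_solves hn hx
      simp only [Pi.sub_apply, P, P']
      linear_combination (norm := skip) hGP / h₀ - f₀ / h₀ * hPP
      field_simp
      ring
  refine ⟨c * sqrt h₀, fun x hx => ?_⟩
  rw [mul_div_cancel_right₀ c (sqrt_pos.2 hh₀).ne', ← hc x hx]
  simp only [Pi.sub_apply, P]
  ring
end

section
/- Let h₀ > 0, let n be a real number with n ∉ {2, 3, 4}, and let f₀, λ, c, c₁, c₀ be real numbers satisfying c² = λ + f₀·c₁. Define F(x) := (2c/√h₀)·x^(2−n/2)/((2−n)(2−n/2)) + (f₀/h₀)·x^(3−n)/((2−n)²(3−n)) + c₁·x + c₀ for x > 0. Then F″(x) = (c/√h₀)·x^(−n/2) + (f₀/h₀)·x^(1−n)/(2−n) and h₀·xⁿ·(F″(x))² = λ + f₀·F′(x) for all x > 0. -/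
/-!
With `u x = x ^ (1 - n/2) / (√h₀ (2 - n))` the candidate satisfies `F' = c₁ + 2 c u + f₀ u²` and
`√h₀ x^(n/2) F'' = c + f₀ u`, so `h₀ xⁿ (F'')² = (c + f₀ u)² = c² + f₀ (F' - c₁)`, which is
`λ + f₀ F'` by `c² = λ + f₀ c₁`.
-/

open Filter Topology

theorem Real.hasDerivAt_rpow_const_of_sub_one_eq {x p q : ℝ} (hx : 0 < x) (hq : p - 1 = q) :
    HasDerivAt (fun t => t ^ p) (p * x ^ q) x :=
  hq ▸ Real.hasDerivAt_rpow_const (Or.inl hx.ne')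

theorem Real.rpow_mul_rpow_mul_rpow {x a b c d : ℝ} (hx : 0 < x) (h : a + b + c = d) :
    x ^ a * x ^ b * x ^ c = x ^ d := by
  rw [← Real.rpow_add hx, ← Real.rpow_add hx, h]

theorem deriv_deriv_eq_of_hasDerivAt {f f' : ℝ → ℝ} {f'' x : ℝ}
    (hf : ∀ᶠ y in 𝓝 x, HasDerivAt f (f' y) y) (hf' : HasDerivAt f' f'' x) :
    deriv (deriv f) x = f'' := by
  have hderiv : deriv f =ᶠ[𝓝 x] f' := hf.mono fun y hy => hy.deriv
  rw [hderiv.deriv_eq, hf'.deriv]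

theorem mul_mul_div_mul_cancel {a b c d : ℝ} (hb : b ≠ 0) : a * (b * c) / (d * b) = a * c / d := by
  rw [mul_left_comm, mul_comm d, mul_div_mul_left _ _ hb]

namespace HomingValue

noncomputable def fn (h₀ f₀ c c₁ c₀ n x : ℝ) : ℝ :=
  (2 * c / Real.sqrt h₀) * x ^ (2 - n / 2) / ((2 - n) * (2 - n / 2))
    + (f₀ / h₀) * x ^ (3 - n) / ((2 - n) ^ 2 * (3 - n)) + c₁ * x + c₀

noncomputable def deriv₁ (h₀ f₀ c c₁ n x : ℝ) : ℝ :=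
  (2 * c / Real.sqrt h₀) * x ^ (1 - n / 2) / (2 - n) + (f₀ / h₀) * x ^ (2 - n) / (2 - n) ^ 2 + c₁

noncomputable def deriv₂ (h₀ f₀ c n x : ℝ) : ℝ :=
  (c / Real.sqrt h₀) * x ^ (-n / 2) + (f₀ / h₀) * x ^ (1 - n) / (2 - n)

variable {h₀ f₀ c c₁ c₀ n x : ℝ}

theorem hasDerivAt_fn (hn3 : n ≠ 3) (hn4 : n ≠ 4) (hx : 0 < x) :
    HasDerivAt (fn h₀ f₀ c c₁ c₀ n) (deriv₁ h₀ f₀ c c₁ n x) x := by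
  have h := ((((Real.hasDerivAt_rpow_const_of_sub_one_eq (p := 2 - n / 2) (q := 1 - n / 2) hx
    (by ring)).const_mul (2 * c / Real.sqrt h₀)).div_const ((2 - n) * (2 - n / 2))).add
    (((Real.hasDerivAt_rpow_const_of_sub_one_eq (p := 3 - n) (q := 2 - n) hx
    (by ring)).const_mul (f₀ / h₀)).div_const ((2 - n) ^ 2 * (3 - n)))).add
    ((hasDerivAt_id x).const_mul c₁) |>.add_const c₀
  refine h.congr_deriv ?_
  rw [mul_mul_div_mul_cancel (fun h => hn4 (by linarith)),
    mul_mul_div_mul_cancel (sub_ne_zero.mpr (Ne.symm hn3)), mul_one]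
  rfl

theorem hasDerivAt_deriv₁ (hn2 : n ≠ 2) (hx : 0 < x) :
    HasDerivAt (deriv₁ h₀ f₀ c c₁ n) (deriv₂ h₀ f₀ c n x) x := by
  have h := ((((Real.hasDerivAt_rpow_const_of_sub_one_eq (p := 1 - n / 2) (q := -n / 2) hx
    (by ring)).const_mul (2 * c / Real.sqrt h₀)).div_const (2 - n)).add
    (((Real.hasDerivAt_rpow_const_of_sub_one_eq (p := 2 - n) (q := 1 - n) hx
    (by ring)).const_mul (f₀ / h₀)).div_const ((2 - n) ^ 2))).add_const c₁
  have : 2 - n ≠ 0 := sub_ne_zero.mpr (Ne.symm hn2)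
  refine h.congr_deriv ?_
  unfold deriv₂
  field_simp

theorem mul_rpow_mul_deriv₂_sq (hh₀ : 0 < h₀) (hn2 : n ≠ 2) (hx : 0 < x) :
    h₀ * x ^ n * deriv₂ h₀ f₀ c n x ^ 2 = c ^ 2 + f₀ * (deriv₁ h₀ f₀ c c₁ n x - c₁) := by
  have e₁ : x ^ n * x ^ (-n / 2) * x ^ (-n / 2) = 1 := by
    rw [Real.rpow_mul_rpow_mul_rpow (d := 0) hx (by ring), Real.rpow_zero]
  have e₂ : x ^ n * x ^ (-n / 2) * x ^ (1 - n) = x ^ (1 - n / 2) :=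
    Real.rpow_mul_rpow_mul_rpow hx (by ring)
  have e₃ : x ^ n * x ^ (1 - n) * x ^ (1 - n) = x ^ (2 - n) :=
    Real.rpow_mul_rpow_mul_rpow hx (by ring)
  have : 2 - n ≠ 0 := sub_ne_zero.mpr (Ne.symm hn2)
  obtain ⟨s, hs, rfl⟩ : ∃ s, 0 < s ∧ h₀ = s ^ 2 :=
    ⟨_, Real.sqrt_pos.mpr hh₀, (Real.sq_sqrt hh₀.le).symm⟩
  unfold deriv₁ deriv₂
  rw [Real.sqrt_sq hs.le]
  linear_combination (norm := skip) c ^ 2 * e₁ + 2 * c * f₀ / (s * (2 - n)) * e₂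
    + f₀ ^ 2 / (s ^ 2 * (2 - n) ^ 2) * e₃
  field_simp
  ring

end HomingValue

open HomingValue in
theorem stmt_5 (h₀ f₀ lam c c₁ c₀ n : ℝ) (hh₀ : 0 < h₀)
    (hn2 : n ≠ 2) (hn3 : n ≠ 3) (hn4 : n ≠ 4)
    (hc : c ^ 2 = lam + f₀ * c₁)
    (F : ℝ → ℝ)
    (hF : ∀ x : ℝ, 0 < x →
      F x = (2 * c / Real.sqrt h₀) * x ^ (2 - n / 2) / ((2 - n) * (2 - n / 2))
        + (f₀ / h₀) * x ^ (3 - n) / ((2 - n) ^ 2 * (3 - n)) + c₁ * x + c₀) :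
    ∀ x : ℝ, 0 < x →
      deriv (deriv F) x = (c / Real.sqrt h₀) * x ^ (-n / 2)
          + (f₀ / h₀) * x ^ (1 - n) / (2 - n) ∧
      h₀ * x ^ n * (deriv (deriv F) x) ^ 2 = lam + f₀ * deriv F x := by
  have hF' : ∀ y, 0 < y → HasDerivAt F (deriv₁ h₀ f₀ c c₁ n y) y := fun y hy =>
    (hasDerivAt_fn hn3 hn4 hy).congr_of_eventuallyEq
      ((eventually_gt_nhds hy).mono hF)
  intro x hx
  have hF'' : deriv (deriv F) x = deriv₂ h₀ f₀ c n x :=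
    deriv_deriv_eq_of_hasDerivAt ((eventually_gt_nhds hx).mono hF') (hasDerivAt_deriv₁ hn2 hx)
  refine ⟨hF'', ?_⟩
  rw [hF'', (hF' x hx).deriv, mul_rpow_mul_deriv₂_sq (c₁ := c₁) hh₀ hn2 hx, hc]
  ring
end

section
/- Let h₀ > 0 and let f₀, λ, c, c₁, c₀ be real numbers satisfying c² = λ + f₀·c₁. Define F(x) := (c/√h₀)·x·(ln x − 1) + (f₀/(4h₀))·x·((ln x)² − 2·ln x + 2) + c₁·x + c₀ for x > 0. Then F″(x) = (c/√h₀)·(1/x) + (f₀/(2h₀))·(ln x)/x and h₀·x²·(F″(x))² = λ + f₀·F′(x) for all x > 0. -/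
/-!
With `a = c/√h₀` and `b = f₀/(4h₀)` one has `F' = a L + b L² + c₁` and `x F'' = a + 2 b L`,
where `L = ln x`. Hence `h₀ x² F''² = c² + f₀ (a L + b L²)`, and the relation `c² = λ + f₀ c₁`
turns this into `λ + f₀ F'`.
-/

open Real Set

lemma hasDerivAt_mul_log_sub_one {x : ℝ} (hx : x ≠ 0) :
    HasDerivAt (fun y => y * (log y - 1)) (log x) x := by
  have H := (hasDerivAt_mul_log hx).fun_sub (hasDerivAt_id' x)
  simpa only [add_sub_cancel_right, mul_sub_one] using H

lemma hasDerivAt_mul_log_sq_sub {x : ℝ} (hx : x ≠ 0) :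
    HasDerivAt (fun y => y * (log y ^ 2 - 2 * log y + 2)) (log x ^ 2) x := by
  have hlog : HasDerivAt log x⁻¹ x := hasDerivAt_log hx
  refine ((hasDerivAt_id' x).fun_mul
    (((hlog.fun_pow 2).fun_sub (hlog.const_mul 2)).add_const 2)).congr_deriv ?_
  field_simp
  ring

/-- The paper's value function `F`, with `a = c/√h₀` and `b = f₀/(4h₀)`. -/
noncomputable def homingValue (a b c₁ c₀ x : ℝ) : ℝ :=
  a * x * (log x - 1) + b * x * (log x ^ 2 - 2 * log x + 2) + c₁ * x + c₀

section homingValue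

variable (a b c₁ c₀ : ℝ)

lemma hasDerivAt_homingValue {x : ℝ} (hx : x ≠ 0) :
    HasDerivAt (homingValue a b c₁ c₀) (a * log x + b * log x ^ 2 + c₁) x := by
  have hform : homingValue a b c₁ c₀ = fun y =>
      a * (y * (log y - 1)) + b * (y * (log y ^ 2 - 2 * log y + 2)) + (c₁ * y + c₀) := by
    funext y; simp only [homingValue]; ring
  rw [hform]
  exact ((((hasDerivAt_mul_log_sub_one hx).const_mul a).fun_add
    ((hasDerivAt_mul_log_sq_sub hx).const_mul b)).fun_add
    (((hasDerivAt_id' x).const_mul c₁).add_const c₀)).congr_deriv (by ring)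

lemma eqOn_deriv_homingValue :
    EqOn (deriv (homingValue a b c₁ c₀)) (fun x => a * log x + b * log x ^ 2 + c₁) {0}ᶜ :=
  fun _ hx => (hasDerivAt_homingValue a b c₁ c₀ hx).deriv

lemma deriv_deriv_homingValue {x : ℝ} (hx : x ≠ 0) :
    deriv (deriv (homingValue a b c₁ c₀)) x = (a + 2 * b * log x) / x := by
  rw [(eqOn_deriv_homingValue a b c₁ c₀).deriv isOpen_compl_singleton hx]
  have hlog : HasDerivAt log x⁻¹ x := hasDerivAt_log hx
  refine (((hlog.const_mul a).fun_add ((hlog.fun_pow 2).const_mul b)).add_const c₁).deriv.trans ?_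
  field_simp
  ring

end homingValue

theorem stmt_6 (h₀ f₀ lam c c₁ c₀ : ℝ) (hh₀ : 0 < h₀)
    (hc : c ^ 2 = lam + f₀ * c₁)
    (F : ℝ → ℝ)
    (hF : ∀ x : ℝ, 0 < x →
      F x = (c / Real.sqrt h₀) * x * (Real.log x - 1)
        + (f₀ / (4 * h₀)) * x * ((Real.log x) ^ 2 - 2 * Real.log x + 2)
        + c₁ * x + c₀) :
    ∀ x : ℝ, 0 < x →
      deriv (deriv F) x = (c / Real.sqrt h₀) * (1 / x)
          + (f₀ / (2 * h₀)) * Real.log x / x ∧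
      h₀ * x ^ 2 * (deriv (deriv F) x) ^ 2 = lam + f₀ * deriv F x := by
  intro x hx
  set a := c / √h₀
  set b := f₀ / (4 * h₀)
  have hFG : EqOn F (homingValue a b c₁ c₀) (Ioi 0) := hF
  have hF' : EqOn (deriv F) (deriv (homingValue a b c₁ c₀)) (Ioi 0) := hFG.deriv isOpen_Ioi
  rw [hF'.deriv isOpen_Ioi hx, hF' hx, deriv_deriv_homingValue _ _ _ _ hx.ne',
    (hasDerivAt_homingValue a b c₁ c₀ hx.ne').deriv]
  have ha : h₀ * a ^ 2 = c ^ 2 := by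
    simp only [a]; rw [div_pow, sq_sqrt hh₀.le]; field_simp
  have hb : 4 * h₀ * b = f₀ := by simp only [b]; field_simp
  refine ⟨by rw [← hb]; field_simp; ring, ?_⟩
  have hlhs : h₀ * x ^ 2 * ((a + 2 * b * log x) / x) ^ 2
      = h₀ * a ^ 2 + 4 * h₀ * b * (a * log x + b * log x ^ 2) := by
    field_simp
    ring
  rw [hlhs, ha, hb, hc]
  ring
end

section
/- Let h₀ > 0 and let f₀, λ, c, c₁, c₀ be real numbers satisfying c² = λ + f₀·c₁. Define F(x) := −(4c/√h₀)·x^(1/2) + (f₀/h₀)·ln x + c₁·x + c₀ for x > 0. Then F″(x) = (c/√h₀)·x^(−3/2) − (f₀/h₀)·x^(−2) and h₀·x³·(F″(x))² = λ + f₀·F′(x) for all x > 0. -/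
/-! The two derivatives are computed termwise on `(0, ∞)`. Writing `x = t²` and `h₀ = s²` turns
every power into an integer power of `t`; the cross terms of `h₀ x³ (F″)²` and `λ + f₀ F′` then
agree, and the constant terms agree because `c² = λ + f₀ c₁`. -/

open Real Set

lemma hasDerivAt_rpow_half_log_affine (a b c₁ c₀ : ℝ) {x : ℝ} (hx : 0 < x) :
    HasDerivAt (fun y => a * y ^ ((1 : ℝ) / 2) + b * log y + c₁ * y + c₀)
      (a / 2 * x ^ (-(1 : ℝ) / 2) + b * x⁻¹ + c₁) x := by
  have hpow : HasDerivAt (fun y : ℝ => y ^ ((1 : ℝ) / 2)) ((1 / 2) * x ^ ((1 : ℝ) / 2 - 1)) x :=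
    hasDerivAt_rpow_const (Or.inl hx.ne')
  refine ((((hpow.const_mul a).add ((hasDerivAt_log hx.ne').const_mul b)).add
    ((hasDerivAt_id x).const_mul c₁)).add_const c₀).congr_deriv ?_
  norm_num
  ring

lemma hasDerivAt_rpow_neg_half_inv_add_const (a b c₁ : ℝ) {x : ℝ} (hx : 0 < x) :
    HasDerivAt (fun y => a / 2 * y ^ (-(1 : ℝ) / 2) + b * y⁻¹ + c₁)
      (-(a / 4) * x ^ (-(3 : ℝ) / 2) - b * x ^ (-(2 : ℝ))) x := by
  have hpow : HasDerivAt (fun y : ℝ => y ^ (-(1 : ℝ) / 2))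
      (-(1 : ℝ) / 2 * x ^ (-(1 : ℝ) / 2 - 1)) x :=
    hasDerivAt_rpow_const (Or.inl hx.ne')
  refine (((hpow.const_mul (a / 2)).add ((hasDerivAt_inv hx.ne').const_mul b)).add_const
    c₁).congr_deriv ?_
  rw [rpow_neg hx.le, rpow_two]
  norm_num
  ring

lemma eqOn_deriv_of_hasDerivAt {F G G' : ℝ → ℝ} {s : Set ℝ} (hs : IsOpen s) (hFG : EqOn F G s)
    (hG : ∀ x ∈ s, HasDerivAt G (G' x) x) : EqOn (deriv F) G' s := fun x hx =>
  (hFG.deriv hs hx).trans (hG x hx).deriv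

lemma homing_ode_of_sq_eq {h₀ f₀ lam c c₁ x : ℝ} (hh₀ : 0 < h₀) (hc : c ^ 2 = lam + f₀ * c₁)
    (hx : 0 < x) :
    h₀ * x ^ 3 * (c / √h₀ * x ^ (-(3 : ℝ) / 2) - f₀ / h₀ * x ^ (-(2 : ℝ))) ^ 2
      = lam + f₀ * (-(4 * c / √h₀) / 2 * x ^ (-(1 : ℝ) / 2) + f₀ / h₀ * x⁻¹ + c₁) := by
  rw [rpow_div_two_eq_sqrt _ hx.le, rpow_div_two_eq_sqrt _ hx.le, rpow_neg hx.le,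
    rpow_neg (sqrt_nonneg x), rpow_neg (sqrt_nonneg x), rpow_two, rpow_ofNat, rpow_one]
  obtain ⟨t, ht, rfl⟩ : ∃ t, 0 < t ∧ x = t ^ 2 := ⟨√x, sqrt_pos.2 hx, (sq_sqrt hx.le).symm⟩
  obtain ⟨s, hs, rfl⟩ : ∃ s, 0 < s ∧ h₀ = s ^ 2 := ⟨√h₀, sqrt_pos.2 hh₀, (sq_sqrt hh₀.le).symm⟩
  rw [sqrt_sq ht.le, sqrt_sq hs.le]
  field_simp
  linear_combination 2 * s ^ 2 * t ^ 2 * hc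

theorem stmt_7 (h₀ f₀ lam c c₁ c₀ : ℝ) (hh₀ : 0 < h₀)
    (hc : c ^ 2 = lam + f₀ * c₁)
    (F : ℝ → ℝ)
    (hF : ∀ x : ℝ, 0 < x →
      F x = -(4 * c / Real.sqrt h₀) * x ^ ((1 : ℝ) / 2) + (f₀ / h₀) * Real.log x
        + c₁ * x + c₀) :
    ∀ x : ℝ, 0 < x →
      deriv (deriv F) x = (c / Real.sqrt h₀) * x ^ (-(3 : ℝ) / 2)
          - (f₀ / h₀) * x ^ (-(2 : ℝ)) ∧
      h₀ * x ^ 3 * (deriv (deriv F) x) ^ 2 = lam + f₀ * deriv F x := by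
  have hF' := eqOn_deriv_of_hasDerivAt isOpen_Ioi (fun x hx => hF x hx) fun x hx =>
    hasDerivAt_rpow_half_log_affine (-(4 * c / √h₀)) (f₀ / h₀) c₁ c₀ hx
  have hF'' := eqOn_deriv_of_hasDerivAt isOpen_Ioi hF' fun x hx =>
    hasDerivAt_rpow_neg_half_inv_add_const (-(4 * c / √h₀)) (f₀ / h₀) c₁ hx
  intro x hx
  have hF''x : deriv (deriv F) x = c / √h₀ * x ^ (-(3 : ℝ) / 2) - f₀ / h₀ * x ^ (-(2 : ℝ)) := by
    rw [hF'' hx]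
    ring
  refine ⟨hF''x, ?_⟩
  rw [hF''x, hF' hx]
  exact homing_ode_of_sq_eq hh₀ hc hx
end

section
/- Let f₀ > 0, v₀ > 0, q₀ > 0 and let λ, c, d₁ be real numbers. Define F(x) := (2f₀q₀/(3v₀²))·(x³ − d₁³) + (c·√(2q₀)/v₀)·(x² − d₁²) + ((c² − λ)/f₀)·(x − d₁) for x ∈ ℝ. Then F(d₁) = 0 and (v₀²/(8q₀))·(F″(x))² = λ + f₀·F′(x) for all x ∈ ℝ. -/
/-!
F is a cubic, so F″ is affine. The leading coefficient 2f₀q₀/(3v₀²) makes (v₀²/(8q₀))(F″)² agree with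
f₀F′ in the x² and x terms; the coefficient c√(2q₀)/v₀ makes the constant term of the left side c²,
which the linear coefficient (c² − λ)/f₀ of F turns into λ on the right.
-/

section Cubic

variable (a b e d : ℝ)

theorem hasDerivAt_cubic_sub (x : ℝ) :
    HasDerivAt (fun x : ℝ => a * (x ^ 3 - d ^ 3) + b * (x ^ 2 - d ^ 2) + e * (x - d))
      (3 * a * x ^ 2 + 2 * b * x + e) x := by
  have h := ((((hasDerivAt_pow 3 x).sub_const (d ^ 3)).const_mul a).add
    (((hasDerivAt_pow 2 x).sub_const (d ^ 2)).const_mul b)).add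
    (((hasDerivAt_id' x).sub_const d).const_mul e)
  exact h.congr_deriv (by push_cast; ring)

theorem hasDerivAt_quadratic (x : ℝ) :
    HasDerivAt (fun x : ℝ => 3 * a * x ^ 2 + 2 * b * x + e) (6 * a * x + 2 * b) x := by
  have h := (((hasDerivAt_pow 2 x).const_mul (3 * a)).add
    ((hasDerivAt_id' x).const_mul (2 * b))).add_const e
  exact h.congr_deriv (by push_cast; ring)

theorem deriv_cubic_sub :
    deriv (fun x : ℝ => a * (x ^ 3 - d ^ 3) + b * (x ^ 2 - d ^ 2) + e * (x - d)) =
      fun x => 3 * a * x ^ 2 + 2 * b * x + e :=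
  funext fun x => (hasDerivAt_cubic_sub a b e d x).deriv

theorem deriv_deriv_cubic_sub :
    deriv (deriv fun x : ℝ => a * (x ^ 3 - d ^ 3) + b * (x ^ 2 - d ^ 2) + e * (x - d)) =
      fun x => 6 * a * x + 2 * b := by
  rw [deriv_cubic_sub]
  exact funext fun x => (hasDerivAt_quadratic a b e x).deriv

end Cubic

theorem stmt_9 (f₀ v₀ q₀ lam c d₁ : ℝ)
    (hf₀ : 0 < f₀) (hv₀ : 0 < v₀) (hq₀ : 0 < q₀)
    (F : ℝ → ℝ)
    (hF : ∀ x : ℝ,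
      F x = (2 * f₀ * q₀ / (3 * v₀ ^ 2)) * (x ^ 3 - d₁ ^ 3)
        + (c * Real.sqrt (2 * q₀) / v₀) * (x ^ 2 - d₁ ^ 2)
        + ((c ^ 2 - lam) / f₀) * (x - d₁)) :
    F d₁ = 0 ∧
    ∀ x : ℝ, (v₀ ^ 2 / (8 * q₀)) * (deriv (deriv F) x) ^ 2 = lam + f₀ * deriv F x := by
  refine ⟨by simp [hF], fun x => ?_⟩
  rw [funext hF, deriv_deriv_cubic_sub, deriv_cubic_sub]
  have hsqrt : Real.sqrt (2 * q₀) ^ 2 = 2 * q₀ := Real.sq_sqrt (by positivity)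
  generalize Real.sqrt (2 * q₀) = s at hsqrt ⊢
  field_simp
  linear_combination 36 * v₀ ^ 2 * c ^ 2 * hsqrt
end

section
/- Let 0 ≤ d₁ < d₂ and let λ, K₀ be real numbers with K₀ > (1/3)·(d₂ − d₁)³ − λ·(d₂ − d₁). Define D := (d₂² − d₁²)² − 4·(d₂ − d₁)·((1/3)·(d₂³ − d₁³) − λ·(d₂ − d₁) − K₀) and c := −(d₂ + d₁)/2 − √D/(2·(d₂ − d₁)), and define F(x) := (1/3)·(x³ − d₁³) + c·(x² − d₁²) + (c² − λ)·(x − d₁). Then: (i) D > (d₂ − d₁)⁴ > 0; (ii) c < −d₂; (iii) F(d₁) = 0 and F(d₂) = K₀; (iv) (1/4)·(F″(x))² = λ + F′(x) for all x ∈ ℝ; and (v) F″(x) = 2x + 2c < 0 for all x ∈ [d₁, d₂]. -/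
theorem stmt_11 (d₁ d₂ lam K₀ : ℝ) (hd₁ : 0 ≤ d₁) (hd : d₁ < d₂)
    (hK₀ : K₀ > (1 / 3) * (d₂ - d₁) ^ 3 - lam * (d₂ - d₁))
    (D c : ℝ)
    (hD : D = (d₂ ^ 2 - d₁ ^ 2) ^ 2
      - 4 * (d₂ - d₁) * ((1 / 3) * (d₂ ^ 3 - d₁ ^ 3) - lam * (d₂ - d₁) - K₀))
    (hc : c = -(d₂ + d₁) / 2 - Real.sqrt D / (2 * (d₂ - d₁)))
    (F : ℝ → ℝ)
    (hF : ∀ x : ℝ,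
      F x = (1 / 3) * (x ^ 3 - d₁ ^ 3) + c * (x ^ 2 - d₁ ^ 2) + (c ^ 2 - lam) * (x - d₁)) :
    (D > (d₂ - d₁) ^ 4 ∧ (d₂ - d₁) ^ 4 > 0) ∧
    c < -d₂ ∧
    (F d₁ = 0 ∧ F d₂ = K₀) ∧
    (∀ x : ℝ, (1 / 4) * (deriv (deriv F) x) ^ 2 = lam + deriv F x) ∧
    (∀ x ∈ Set.Icc d₁ d₂, deriv (deriv F) x = 2 * x + 2 * c ∧ 2 * x + 2 * c < 0) := by
  have hdd : 0 < d₂ - d₁ := by linarith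
  have hDgt : D > (d₂ - d₁) ^ 4 := by nlinarith [sq_nonneg (d₂ - d₁), sq_nonneg (d₂ + d₁)]
  have hpos : (d₂ - d₁) ^ 4 > 0 := by positivity
  have hDpos : 0 < D := lt_trans hpos hDgt
  have hsq : Real.sqrt D ^ 2 = D := Real.sq_sqrt hDpos.le
  have hsqgt : Real.sqrt D > (d₂ - d₁) ^ 2 := by
    have : Real.sqrt ((d₂ - d₁) ^ 4) < Real.sqrt D :=
      Real.sqrt_lt_sqrt (by positivity) hDgt
    have h4 : Real.sqrt ((d₂ - d₁) ^ 4) = (d₂ - d₁) ^ 2 := by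
      rw [show (d₂ - d₁) ^ 4 = ((d₂ - d₁) ^ 2) ^ 2 by ring, Real.sqrt_sq (by positivity)]
    linarith [h4 ▸ this]
  have hclt : c < -d₂ := by
    rw [hc]
    have h3 : (d₂ - d₁) / 2 < Real.sqrt D / (2 * (d₂ - d₁)) := by
      rw [lt_div_iff₀ (by positivity)]
      nlinarith
    linarith
  -- quadratic root
  have hroot : (d₂ - d₁) * c ^ 2 + (d₂ ^ 2 - d₁ ^ 2) * c +
      ((1 / 3) * (d₂ ^ 3 - d₁ ^ 3) - lam * (d₂ - d₁) - K₀) = 0 := by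
    have hcne : (2 * (d₂ - d₁)) ≠ 0 := by positivity
    have hc2 : 2 * (d₂ - d₁) * c = -(d₂ + d₁) * (d₂ - d₁) - Real.sqrt D := by
      rw [hc]; field_simp
    nlinarith [hsq, hc2, sq_nonneg (Real.sqrt D)]
  have hF1 : F d₁ = 0 := by rw [hF]; ring
  have hF2 : F d₂ = K₀ := by rw [hF]; nlinarith [hroot]
  -- derivatives
  have hH1 : ∀ x : ℝ, HasDerivAt F (x ^ 2 + 2 * c * x + (c ^ 2 - lam)) x := by
    intro x
    have h : HasDerivAt (fun x : ℝ => (1 / 3) * (x ^ 3 - d₁ ^ 3) + c * (x ^ 2 - d₁ ^ 2)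
        + (c ^ 2 - lam) * (x - d₁))
        ((1 / 3) * ((3 : ℕ) * x ^ 2) + c * ((2 : ℕ) * x ^ 1) + (c ^ 2 - lam) * 1) x := by
      exact ((((hasDerivAt_pow 3 x).sub_const (d₁ ^ 3)).const_mul (1/3)).add
        (((hasDerivAt_pow 2 x).sub_const (d₁ ^ 2)).const_mul c)).add
        (((hasDerivAt_id x).sub_const d₁).const_mul (c ^ 2 - lam))
    have hFe : F = fun x : ℝ => (1 / 3) * (x ^ 3 - d₁ ^ 3) + c * (x ^ 2 - d₁ ^ 2)
        + (c ^ 2 - lam) * (x - d₁) := funext hF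
    rw [hFe]
    convert h using 1
    push_cast
    ring
  have hdF : deriv F = fun x => x ^ 2 + 2 * c * x + (c ^ 2 - lam) :=
    funext fun x => (hH1 x).deriv
  have hH2 : ∀ x : ℝ, HasDerivAt (deriv F) (2 * x + 2 * c) x := by
    intro x
    rw [hdF]
    have h : HasDerivAt (fun x : ℝ => x ^ 2 + 2 * c * x + (c ^ 2 - lam))
        (((2 : ℕ) * x ^ 1) + 2 * c * 1 + 0) x := by
      exact (((hasDerivAt_pow 2 x).add ((hasDerivAt_id x).const_mul (2 * c))).add
        (hasDerivAt_const x (c ^ 2 - lam)))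
    convert h using 1
    push_cast
    ring
  have hddF : ∀ x : ℝ, deriv (deriv F) x = 2 * x + 2 * c := fun x => (hH2 x).deriv
  refine ⟨⟨hDgt, hpos⟩, hclt, ⟨hF1, hF2⟩, ?_, ?_⟩
  · intro x
    rw [hddF x, hdF]
    ring
  · intro x hx
    exact ⟨hddF x, by linarith [hx.2]⟩
end

section
/- Let d > 1 and let K₀ be a real number with K₀ > 4·(d − 1 − ln d − (1/2)·(ln d)²). Define Disc := 8·d·(ln d)² − 8·(d − 1)² + 4·(d − 1)·K₀ and c := (−2√2·(d·ln d − d + 1) − √Disc)/(2·(d − 1)). Then Disc > 0, c < −√2·ln d, and consequently 2√2·c/x + 4·(ln x)/x < 0 for all x ∈ [1, d]. -/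
/-!
The lower bound on `K₀` is exactly what makes `Disc` exceed `8 (d - 1 - ln d)²`, so
`√Disc > 2√2 (d - 1 - ln d)`; substituting this into the formula for `c` gives `c < -√2 ln d`.
Then `2√2 c + 4 ln x < 4 (ln x - ln d) ≤ 0` on `[1, d]`.
-/

open Real

lemma eight_mul_sq_lt_disc {d K₀ L : ℝ} (hd : 1 < d)
    (hK₀ : K₀ > 4 * (d - 1 - L - (1 / 2) * L ^ 2)) :
    8 * (d - 1 - L) ^ 2 < 8 * d * L ^ 2 - 8 * (d - 1) ^ 2 + 4 * (d - 1) * K₀ := by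
  have h := mul_lt_mul_of_pos_left hK₀ (sub_pos.mpr hd)
  nlinarith

lemma two_mul_sqrt_two_mul_lt_sqrt {a D : ℝ} (h : 8 * a ^ 2 < D) :
    2 * √2 * a < √D := by
  have h8 : √(8 * a ^ 2) = 2 * √2 * |a| := by
    rw [show (8 : ℝ) * a ^ 2 = (2 * √2) ^ 2 * a ^ 2 by
      rw [mul_pow, sq_sqrt zero_le_two]; norm_num]
    rw [sqrt_mul (sq_nonneg _), sqrt_sq (by positivity), sqrt_sq_eq_abs]
  calc 2 * √2 * a ≤ 2 * √2 * |a| := by gcongr; exact le_abs_self a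
    _ = √(8 * a ^ 2) := h8.symm
    _ < √D := sqrt_lt_sqrt (by positivity) h

lemma root_lt_neg_sqrt_two_mul {d L s : ℝ} (hd : 1 < d) (hs : 2 * √2 * (d - 1 - L) < s) :
    (-(2 * √2) * (d * L - d + 1) - s) / (2 * (d - 1)) < -√2 * L := by
  rw [div_lt_iff₀ (by linarith)]
  nlinarith

lemma two_mul_sqrt_two_mul_div_add_log_div_neg {c d x : ℝ} (hc : c < -√2 * log d)
    (hx : x ∈ Set.Icc 1 d) :
    2 * √2 * c / x + 4 * log x / x < 0 := by
  obtain ⟨hx1, hxd⟩ := hx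
  have hx0 : 0 < x := by linarith
  have hlog : log x ≤ log d := log_le_log hx0 hxd
  have hnum : 2 * √2 * c + 4 * log x < 0 :=
    calc 2 * √2 * c + 4 * log x < 2 * √2 * (-√2 * log d) + 4 * log x := by
          gcongr
      _ = 4 * (log x - log d) := by
          rw [show 2 * √2 * (-√2 * log d) = -(2 * (√2 * √2) * log d) by ring,
            mul_self_sqrt zero_le_two]
          ring
      _ ≤ 0 := by linarith
  rw [← add_div]
  exact div_neg_of_neg_of_pos hnum hx0

theorem stmt_14 (d K₀ : ℝ) (hd : 1 < d)
    (hK₀ : K₀ > 4 * (d - 1 - Real.log d - (1 / 2) * (Real.log d) ^ 2))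
    (Disc c : ℝ)
    (hDisc : Disc = 8 * d * (Real.log d) ^ 2 - 8 * (d - 1) ^ 2 + 4 * (d - 1) * K₀)
    (hc : c = (-(2 * Real.sqrt 2) * (d * Real.log d - d + 1) - Real.sqrt Disc)
        / (2 * (d - 1))) :
    Disc > 0 ∧
    c < -(Real.sqrt 2) * Real.log d ∧
    ∀ x ∈ Set.Icc (1 : ℝ) d, 2 * Real.sqrt 2 * c / x + 4 * Real.log x / x < 0 := by
  have hgap : 8 * (d - 1 - log d) ^ 2 < Disc := hDisc ▸ eight_mul_sq_lt_disc hd hK₀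
  have hcd : c < -√2 * log d :=
    hc ▸ root_lt_neg_sqrt_two_mul hd (two_mul_sqrt_two_mul_lt_sqrt hgap)
  exact ⟨lt_of_le_of_lt (by positivity) hgap, hcd,
    fun x hx => two_mul_sqrt_two_mul_div_add_log_div_neg hcd hx⟩
end

section
/- Let d > 1 and let K₀ be a real number with K₀ > 4·(d − 1 − ln d − (1/2)·(ln d)²). Define Disc := 8·d·(ln d)² − 8·(d − 1)² + 4·(d − 1)·K₀ and c := (−2√2·(d·ln d − d + 1) − √Disc)/(2·(d − 1)), and define F(x) := 2·x·ln x·(ln x + √2·c − 2) + (x − 1)·(c² − 2√2·c + 4) for x > 0. Then: (i) F(1) = 0; (ii) F(d) = K₀; (iii) F″(x) = 2√2·c/x + 4·(ln x)/x and (x²/8)·(F″(x))² = F′(x) for all x > 0; and (iv) F″(x) < 0 for all x ∈ [1, d]. -/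
/-!
`F x = ∫₁ˣ (√2 log t + c)² dt`, so `F' = (√2 log x + c)²` and `F'' = 2√2 (√2 log x + c) / x`,
from which the differential equation is immediate. The condition `F d = K₀` is a quadratic
equation in `c` with discriminant `Disc`, and `c` is its smaller root. As `log` is monotone,
`F'' < 0` on `[1, d]` reduces to `√2 log d + c < 0`, that is to `8 (d - 1 - log d)² < Disc`;
and `Disc - 8 (d - 1 - log d)²` is `4 (d - 1)` times the excess of `K₀` over its admissibility
bound.
-/

open Real Set

lemma hasDerivAt_sq_mul_log_add (a b : ℝ) {x : ℝ} (hx : 0 < x) :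
    HasDerivAt (fun y ↦ (a * log y + b) ^ 2) (2 * a * (a * log x + b) / x) x := by
  have hu := ((hasDerivAt_log hx.ne').const_mul a).add_const b
  refine (hu.fun_pow 2).congr_deriv ?_
  field_simp
  ring

/-- `logSqPrimitive a b x = ∫₁ˣ (a log t + b)² dt`. -/
noncomputable def logSqPrimitive (a b x : ℝ) : ℝ :=
  x * ((a * log x + b) ^ 2 - 2 * a * (a * log x + b) + 2 * a ^ 2) - (b ^ 2 - 2 * a * b + 2 * a ^ 2)

namespace logSqPrimitive

variable (a b : ℝ)

lemma apply_one : logSqPrimitive a b 1 = 0 := by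
  simp [logSqPrimitive]

lemma hasDerivAt {x : ℝ} (hx : 0 < x) :
    HasDerivAt (logSqPrimitive a b) ((a * log x + b) ^ 2) x := by
  have hu := ((hasDerivAt_log hx.ne').const_mul a).add_const b
  have hP := ((hu.fun_pow 2).fun_sub (hu.const_mul (2 * a))).add_const (2 * a ^ 2)
  refine (((hasDerivAt_id' x).fun_mul hP).sub_const _).congr_deriv ?_
  field_simp
  ring

lemma deriv_eqOn : EqOn (deriv (logSqPrimitive a b)) (fun x ↦ (a * log x + b) ^ 2) (Ioi 0) :=
  _root_.deriv_eqOn isOpen_Ioi fun _ hx ↦ (hasDerivAt a b hx).hasDerivWithinAt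

lemma deriv_deriv {x : ℝ} (hx : 0 < x) :
    deriv (deriv (logSqPrimitive a b)) x = 2 * a * (a * log x + b) / x := by
  rw [(deriv_eqOn a b).deriv isOpen_Ioi hx, (hasDerivAt_sq_mul_log_add a b hx).deriv]

end logSqPrimitive

section Homing

variable {d K₀ Disc c : ℝ}

lemma sq_lt_disc (hd : 1 < d) (hK₀ : K₀ > 4 * (d - 1 - log d - (1 / 2) * log d ^ 2))
    (hDisc : Disc = 8 * d * log d ^ 2 - 8 * (d - 1) ^ 2 + 4 * (d - 1) * K₀) :
    8 * (d - 1 - log d) ^ 2 < Disc := by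
  have h : 0 < (d - 1) * (K₀ - 4 * (d - 1 - log d - (1 / 2) * log d ^ 2)) :=
    mul_pos (by linarith) (by linarith)
  linear_combination 4 * h - hDisc

lemma sqrt_two_mul_log_add_neg (hd : 1 < d)
    (hK₀ : K₀ > 4 * (d - 1 - log d - (1 / 2) * log d ^ 2))
    (hDisc : Disc = 8 * d * log d ^ 2 - 8 * (d - 1) ^ 2 + 4 * (d - 1) * K₀)
    (hc : c = (-(2 * √2) * (d * log d - d + 1) - √Disc) / (2 * (d - 1))) :
    √2 * log d + c < 0 := by
  have hS : 2 * √2 * (d - 1 - log d) < √Disc := by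
    apply lt_sqrt_of_sq_lt
    rw [mul_pow, mul_pow, sq_sqrt zero_le_two]
    linarith [sq_lt_disc hd hK₀ hDisc]
  have hd1 : (d - 1) ≠ 0 := by linarith
  have h : √2 * log d + c = (2 * √2 * (d - 1 - log d) - √Disc) / (2 * (d - 1)) := by
    rw [hc]
    field_simp
    ring
  rw [h]
  exact div_neg_of_neg_of_pos (by linarith) (by linarith)

lemma logSqPrimitive_sqrt_two_eq (hd : 1 < d)
    (hK₀ : K₀ > 4 * (d - 1 - log d - (1 / 2) * log d ^ 2))
    (hDisc : Disc = 8 * d * log d ^ 2 - 8 * (d - 1) ^ 2 + 4 * (d - 1) * K₀)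
    (hc : c = (-(2 * √2) * (d * log d - d + 1) - √Disc) / (2 * (d - 1))) :
    logSqPrimitive √2 c d = K₀ := by
  have h2 : √2 ^ 2 = 2 := sq_sqrt zero_le_two
  have hdisc : discrim (d - 1) (2 * √2 * (d * log d - d + 1))
      (2 * d * log d ^ 2 - 4 * d * log d + 4 * (d - 1) - K₀) = √Disc * √Disc := by
    rw [discrim, mul_self_sqrt (by linarith [sq_lt_disc hd hK₀ hDisc, sq_nonneg (d - 1 - log d)])]
    linear_combination 4 * (d * log d - d + 1) ^ 2 * h2 - hDisc
  have hroot := (quadratic_eq_zero_iff (by linarith : d - 1 ≠ 0) hdisc c).mpr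
    (Or.inr (by rw [hc]; ring))
  rw [logSqPrimitive]
  linear_combination hroot + (d * log d ^ 2 - 2 * d * log d + 2 * d - 2) * h2

end Homing

theorem stmt_16 (d K₀ : ℝ) (hd : 1 < d)
    (hK₀ : K₀ > 4 * (d - 1 - Real.log d - (1 / 2) * (Real.log d) ^ 2))
    (Disc c : ℝ)
    (hDisc : Disc = 8 * d * (Real.log d) ^ 2 - 8 * (d - 1) ^ 2 + 4 * (d - 1) * K₀)
    (hc : c = (-(2 * Real.sqrt 2) * (d * Real.log d - d + 1) - Real.sqrt Disc)
        / (2 * (d - 1)))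
    (F : ℝ → ℝ)
    (hF : ∀ x : ℝ, 0 < x →
      F x = 2 * x * Real.log x * (Real.log x + Real.sqrt 2 * c - 2)
        + (x - 1) * (c ^ 2 - 2 * Real.sqrt 2 * c + 4)) :
    F 1 = 0 ∧
    F d = K₀ ∧
    (∀ x : ℝ, 0 < x →
      deriv (deriv F) x = 2 * Real.sqrt 2 * c / x + 4 * Real.log x / x ∧
      (x ^ 2 / 8) * (deriv (deriv F) x) ^ 2 = deriv F x) ∧
    (∀ x ∈ Set.Icc (1 : ℝ) d, deriv (deriv F) x < 0) := by
  have h2 : √2 ^ 2 = 2 := sq_sqrt zero_le_two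
  have hF_eq : EqOn F (logSqPrimitive √2 c) (Ioi 0) := fun x hx ↦ by
    rw [hF x hx, logSqPrimitive]
    linear_combination (-(x * log x ^ 2 - 2 * x * log x + 2 * x - 2)) * h2
  have hF' : EqOn (deriv F) (fun x ↦ (√2 * log x + c) ^ 2) (Ioi 0) :=
    (hF_eq.deriv isOpen_Ioi).trans (logSqPrimitive.deriv_eqOn _ _)
  have hF'' (x : ℝ) (hx : 0 < x) : deriv (deriv F) x = 2 * √2 * (√2 * log x + c) / x := by
    rw [(hF_eq.deriv isOpen_Ioi).deriv isOpen_Ioi hx, logSqPrimitive.deriv_deriv _ _ hx]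
  refine ⟨?_, ?_, fun x hx ↦ ⟨?_, ?_⟩, fun x hx ↦ ?_⟩
  · rw [hF_eq (mem_Ioi.2 one_pos), logSqPrimitive.apply_one]
  · rw [hF_eq (zero_lt_one.trans hd), logSqPrimitive_sqrt_two_eq hd hK₀ hDisc hc]
  · rw [hF'' x hx]
    linear_combination 2 * log x / x * h2
  · rw [hF'' x hx, hF' hx, div_pow, mul_pow, mul_pow, h2]
    field_simp
    ring
  · have hx0 : 0 < x := zero_lt_one.trans_le hx.1
    have hlog : √2 * log x ≤ √2 * log d := by gcongr; exact hx.2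
    rw [hF'' x hx0]
    exact div_neg_of_neg_of_pos (mul_neg_of_pos_of_neg (by positivity)
      (by linarith [sqrt_two_mul_log_add_neg hd hK₀ hDisc hc])) hx0
end
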